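/- Let F be the free group on a free generating set A with |A| = d ≥ 2, and let S be a finite symmetric generating set of F with A ⊆ S. Let M = max_{s ∈ S} |s|_A. Let a ∈ A ∪ A⁻¹, and suppose g, y ∈ F are such that the reduced word of g ends with the letter a⁻¹, the reduced word of y does not begin with the letter a, and |y|_A ≥ (2M+1)·M. Then |gy|_S ≥ |g|_S + 1. -/

import Mathlib

/-!
Follow a geodesic `S`-word for `gy` through its prefix products `1 = x₀, …, xₙ = gy` in the Cayley
tree of the basis. As `gy` is reduced as written, this path enters the branch of words beginning
with `g` at some step `x ↦ X = xs`, say the `k`-th. The tree geodesic from `X` back to `x` runs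
through `g`, so `D = |g⁻¹X|_A < |s|_A ≤ M` and `|g|_S ≤ k + D`. The remaining `n - k` steps, each
of `A`-length at most `M`, lead from `X` to `gy` and so cover at least `|y|_A - D ≥ (2M+1)M - D`;
hence `n - k > D`.
-/

open Filter Topology

section Defs

variable {G : Type*}

/-- `d` is a metric on `X` (nonnegative, vanishing exactly on the diagonal,
symmetric, triangle inequality). -/
def IsMetric {X : Type*} (d : X → X → ℝ) : Prop :=
  (∀ x y, 0 ≤ d x y) ∧ (∀ x y, d x y = 0 ↔ x = y) ∧ (∀ x y, d x y = d y x) ∧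
    (∀ x y z, d x z ≤ d x y + d y z)

/-- The Busemann function of `x` with base point `1`: `b_x(y) = d(x,y) - d(x,1)`. -/
def bus [Group G] (d : G → G → ℝ) (x y : G) : ℝ := d x y - d x 1

/-- `h` belongs to the metric-functional boundary `∂(G,d)`: it is a pointwise
limit of Busemann functions and is not itself a Busemann function. -/
def InBoundary [Group G] (d : G → G → ℝ) (h : G → ℝ) : Prop :=
  (∃ u : ℕ → G, ∀ y : G, Tendsto (fun n => bus d (u n) y) atTop (𝓝 (h y))) ∧
    ∀ x : G, h ≠ bus d x

/-- The action of `x ∈ G` on functions: `(x.h)(y) = h(x⁻¹y) - h(x⁻¹)`. -/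
def act [Group G] (x : G) (h : G → ℝ) : G → ℝ := fun y => h (x⁻¹ * y) - h x⁻¹

/-- `S` is a finite symmetric generating set of `G`. -/
def FinSymGen [Group G] (S : Set G) : Prop :=
  S.Finite ∧ (∀ s ∈ S, s⁻¹ ∈ S) ∧ Subgroup.closure S = ⊤

/-- The word length of `x` with respect to `S`: the least `n` such that `x`
is a product of `n` elements of `S`. -/
noncomputable def wordLength [Group G] (S : Set G) (x : G) : ℕ :=
  sInf {n : ℕ | ∃ l : List G, (∀ s ∈ l, s ∈ S) ∧ l.length = n ∧ l.prod = x}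

/-- The word metric with respect to `S` : `d_S(x,y) = |x⁻¹y|_S`. -/
noncomputable def wordDist [Group G] (S : Set G) (x y : G) : ℝ :=
  (wordLength S (x⁻¹ * y) : ℝ)

/-- `(G,d)` is quasi-isometric to a Cayley graph of `G`. -/
def QIToCayley [Group G] (d : G → G → ℝ) : Prop :=
  ∃ S : Set G, FinSymGen S ∧ ∃ φ : G → G, ∃ C : ℝ, 0 < C ∧
    (∀ y : G, ∃ x : G, wordDist S (φ x) y ≤ C) ∧
    ∀ x y : G, C⁻¹ * d x y - C ≤ wordDist S (φ x) (φ y) ∧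
      wordDist S (φ x) (φ y) ≤ C * d x y + C

/-- A Banach metric on `G`: an integer-valued, left-invariant, proper metric,
quasi-isometric to a Cayley graph, all of whose metric functionals are unbounded. -/
def IsBanachMetric [Group G] (d : G → G → ℝ) : Prop :=
  IsMetric d ∧
  (∀ x y : G, ∃ n : ℕ, d x y = n) ∧
  (∀ x y z : G, d (z * x) (z * y) = d x y) ∧
  (∀ r : ℝ, {x : G | d x 1 ≤ r}.Finite) ∧
  QIToCayley d ∧
  ∀ h : G → ℝ, InBoundary d h → ¬ ∃ B : ℝ, ∀ x : G, |h x| ≤ B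

/-- A virtual homomorphism on `G`: a function `φ : G → ℤ` restricting to a
nontrivial homomorphism on some finite index subgroup. -/
def IsVirtualHom [Group G] (φ : G → ℤ) : Prop :=
  ∃ H : Subgroup G, H.FiniteIndex ∧
    (∀ a b : G, a ∈ H → b ∈ H → φ (a * b) = φ a + φ b) ∧
    ∃ a ∈ H, φ a ≠ 0

end Defs

namespace List

variable {M : Type*} [Monoid M]

theorem exists_prefix_prod_crossing (P : M → Prop) :
    ∀ (l : List M), ¬ P 1 → P l.prod →
      ∃ l₁ s l₂, l = l₁ ++ s :: l₂ ∧ ¬ P l₁.prod ∧ P (l₁.prod * s)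
  | [], h₁, hl => absurd hl h₁
  | a :: t, h₁, hl => by
    by_cases ha : P a
    · exact ⟨[], a, t, rfl, by simpa using h₁, by simpa using ha⟩
    · obtain ⟨l₁, s, l₂, rfl, hout, hin⟩ :=
        exists_prefix_prod_crossing (fun m => P (a * m)) t (by simpa using ha) (by simpa using hl)
      exact ⟨a :: l₁, s, l₂, rfl, by simpa using hout, by simpa [mul_assoc] using hin⟩

end List

section WordLength

variable {G : Type*} [Group G] {S : Set G}

theorem wordLength_list_prod_le {l : List G} (hl : ∀ s ∈ l, s ∈ S) :
    wordLength S l.prod ≤ l.length :=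
  Nat.sInf_le ⟨l, hl, rfl, rfl⟩

theorem exists_list_prod_eq_wordLength (hinv : ∀ s ∈ S, s⁻¹ ∈ S)
    (hgen : Subgroup.closure S = ⊤) (x : G) :
    ∃ l : List G, (∀ s ∈ l, s ∈ S) ∧ l.length = wordLength S x ∧ l.prod = x := by
  have hx : x ∈ Submonoid.closure S := by
    have hsymm : S ∪ S⁻¹ = S := Set.union_eq_left.mpr fun s hs => by simpa using hinv _ hs
    rw [← hsymm, ← Subgroup.closure_toSubmonoid, hgen]
    trivial
  obtain ⟨l, hlS, hl⟩ := Submonoid.exists_list_of_mem_closure hx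
  exact Nat.sInf_mem (s := {n | ∃ l : List G, (∀ s ∈ l, s ∈ S) ∧ l.length = n ∧ l.prod = x})
    ⟨l.length, l, hlS, rfl, hl⟩

theorem wordLength_mul_le (hinv : ∀ s ∈ S, s⁻¹ ∈ S) (hgen : Subgroup.closure S = ⊤)
    (x y : G) : wordLength S (x * y) ≤ wordLength S x + wordLength S y := by
  obtain ⟨l₁, hl₁S, hl₁, rfl⟩ := exists_list_prod_eq_wordLength hinv hgen x
  obtain ⟨l₂, hl₂S, hl₂, rfl⟩ := exists_list_prod_eq_wordLength hinv hgen y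
  rw [← hl₁, ← hl₂, ← List.length_append, ← List.prod_append]
  exact wordLength_list_prod_le fun s hs => (List.mem_append.mp hs).elim (hl₁S s) (hl₂S s)

end WordLength

namespace FreeGroup

variable {α : Type*}

theorem mk_cons (a : α × Bool) (L : List (α × Bool)) : mk (a :: L) = mk [a] * mk L := by
  rw [mul_mk, List.singleton_append]

variable [DecidableEq α]

theorem wordLength_le_norm {S : Set (FreeGroup α)} (hinv : ∀ s ∈ S, s⁻¹ ∈ S)
    (hA : ∀ i : α, of i ∈ S) (x : FreeGroup α) : wordLength S x ≤ norm x := by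
  have hS : ∀ s ∈ x.toWord.map fun a => cond a.2 (of a.1) (of a.1)⁻¹, s ∈ S := by
    intro s hs
    obtain ⟨⟨i, _ | _⟩, -, rfl⟩ := List.mem_map.mp hs
    exacts [hinv _ (hA i), hA i]
  simpa only [← lift_mk, mk_toWord, lift_of_apply, List.length_map, norm] using
    wordLength_list_prod_le hS

theorem wordLength_le_add_norm_inv_mul {S : Set (FreeGroup α)} (hinv : ∀ s ∈ S, s⁻¹ ∈ S)
    (hgen : Subgroup.closure S = ⊤) (hA : ∀ i : α, of i ∈ S) (x y : FreeGroup α) :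
    wordLength S x ≤ wordLength S y + norm (x⁻¹ * y) := calc
  wordLength S x = wordLength S (y * (x⁻¹ * y)⁻¹) := by group
  _ ≤ wordLength S y + wordLength S (x⁻¹ * y)⁻¹ := wordLength_mul_le hinv hgen _ _
  _ ≤ wordLength S y + norm (x⁻¹ * y) := by
    grw [wordLength_le_norm hinv hA (x⁻¹ * y)⁻¹, norm_inv_eq]

theorem norm_list_prod_le {M : ℕ} {l : List (FreeGroup α)} (hl : ∀ s ∈ l, norm s ≤ M) :
    norm l.prod ≤ M * l.length := by
  induction l with
  | nil => simp
  | cons a l ih =>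
    rw [List.prod_cons, List.length_cons, Nat.mul_succ, add_comm (M * _)]
    exact (norm_mul_le _ _).trans <|
      add_le_add (hl a List.mem_cons_self) (ih fun s hs => hl s (List.mem_cons_of_mem a hs))

theorem IsReduced.invRev {L : List (α × Bool)} (h : IsReduced L) : IsReduced (invRev L) := by
  rw [isReduced_iff_reduce_eq, reduce_invRev, h.reduce_eq]

theorem toWord_mul_of_getLast?_eq {x y : FreeGroup α} {i : α} {b : Bool}
    (hx : x.toWord.getLast? = some (i, !b)) (hy : ∀ p ∈ y.toWord.head?, p ≠ (i, b)) :
    (x * y).toWord = x.toWord ++ y.toWord := by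
  refine toWord_mul x y ▸ IsReduced.reduce_eq (isReduced_toWord.append isReduced_toWord ?_)
  rintro a ha ⟨j, c⟩ hp rfl
  rw [hx, Option.mem_some_iff] at ha
  subst ha
  exact by_contra fun hc => hy _ hp (Prod.ext rfl (Bool.ne_not.mp (Ne.symm hc)))

theorem exists_common_prefix :
    ∀ {L₁ L₂ : List (α × Bool)}, IsReduced L₁ → IsReduced L₂ →
      ∃ p s t, L₁ = p ++ s ∧ L₂ = p ++ t ∧ ((mk L₁)⁻¹ * mk L₂).toWord = invRev s ++ t
  | [], L₂, _, h₂ => ⟨[], [], L₂, rfl, rfl, by simp [← one_eq_mk, h₂.reduce_eq]⟩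
  | a :: L₁, [], h₁, _ =>
    ⟨[], a :: L₁, [], rfl, rfl, by simp [← one_eq_mk, h₁.invRev.reduce_eq]⟩
  | a :: L₁, b :: L₂, h₁, h₂ => by
    by_cases hab : a = b
    · subst hab
      obtain ⟨p, s, t, rfl, rfl, h⟩ := exists_common_prefix h₁.tail h₂.tail
      refine ⟨a :: p, s, t, rfl, rfl, ?_⟩
      rw [List.tail_cons, List.tail_cons] at h
      rw [← h, mk_cons a (p ++ s), mk_cons a (p ++ t)]
      group
    · refine ⟨[], a :: L₁, b :: L₂, rfl, rfl, ?_⟩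
      rw [inv_mk, mul_mk, toWord_mk]
      refine IsReduced.reduce_eq (h₁.invRev.append h₂ ?_)
      simp only [invRev, List.map_cons, List.reverse_cons, List.getLast?_append_cons,
        List.getLast?_singleton, Option.mem_def, Option.some.injEq, List.head?_cons,
        forall_eq']
      exact fun h₁ => by_contra fun h₂ => hab (Prod.ext h₁ (by simpa using h₂))

/-- The tree geodesic from `X`, inside the branch at `g`, to `x`, outside it, runs through `g`. -/
theorem norm_inv_mul_lt_of_isPrefix {g X x : FreeGroup α} (hX : g.toWord <+: X.toWord)
    (hx : ¬ g.toWord <+: x.toWord) : norm (g⁻¹ * X) < norm (X⁻¹ * x) := by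
  obtain ⟨p, s, t, hXw, hxw, hw⟩ := exists_common_prefix (isReduced_toWord (x := X))
    (isReduced_toWord (x := x))
  rw [mk_toWord, mk_toWord] at hw
  obtain ⟨z, hz⟩ := hX
  obtain ⟨r, hr⟩ : p <+: g.toWord := by
    refine (List.prefix_or_prefix_of_prefix ⟨z, hz⟩ ⟨s, hXw.symm⟩).resolve_left fun hp => hx ?_
    exact hxw ▸ hp.trans (List.prefix_append p t)
  have hr_ne : r ≠ [] := by
    rintro rfl
    exact hx (hxw ▸ hr ▸ by simp)
  have hs : s = r ++ z := by
    rw [← List.append_right_inj p, ← hXw, ← hz, ← hr, List.append_assoc]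
  have hgX : g⁻¹ * X = mk z := by
    rw [inv_mul_eq_iff_eq_mul, ← mk_toWord (x := X), ← hz, ← mul_mk, mk_toWord]
  calc norm (g⁻¹ * X) ≤ z.length := hgX ▸ norm_mk_le
    _ < s.length + t.length := by
      rw [hs, List.length_append]
      have := List.length_pos_iff.mpr hr_ne
      omega
    _ = norm (X⁻¹ * x) := by simp [norm, hw]

end FreeGroup

theorem freeGroup_wordLength_add_one_le_general
    {α : Type*} [DecidableEq α]
    (S : Set (FreeGroup α)) (hS : FinSymGen S)
    (hA : ∀ i : α, FreeGroup.of i ∈ S)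
    (M : ℕ) (hM : ∀ s ∈ S, (FreeGroup.toWord s).length ≤ M)
    (i : α) (b : Bool) (g y : FreeGroup α)
    (hg : (FreeGroup.toWord g).getLast? = some (i, !b))
    (hy : ∀ p ∈ (FreeGroup.toWord y).head?, p ≠ (i, b))
    (hlen : (2 * M + 1) * M ≤ (FreeGroup.toWord y).length) :
    wordLength S g + 1 ≤ wordLength S (g * y) := by
  open FreeGroup in
  obtain ⟨-, hinv, hgen⟩ := hS
  obtain ⟨l, hlS, hl, hl_prod⟩ := exists_list_prod_eq_wordLength hinv hgen (g * y)
  obtain ⟨l₁, s, l₂, rfl, hout, hin⟩ := l.exists_prefix_prod_crossing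
    (fun x => g.toWord <+: x.toWord)
    (fun h => by rw [toWord_one, List.prefix_nil] at h; simp [h] at hg)
    (by rw [hl_prod, toWord_mul_of_getLast?_eq hg hy]; exact List.prefix_append _ _)
  obtain ⟨hl₁S, hsS, hl₂S⟩ : (∀ t ∈ l₁, t ∈ S) ∧ s ∈ S ∧ ∀ t ∈ l₂, t ∈ S := by
    simpa only [List.forall_mem_append, List.forall_mem_cons] using hlS
  set X := l₁.prod * s
  set D := norm (g⁻¹ * X)
  have hD : D < M := calc
    D < norm (X⁻¹ * l₁.prod) := norm_inv_mul_lt_of_isPrefix hin hout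
    _ = norm s := by simp [X]
    _ ≤ M := hM s hsS
  have hX : wordLength S X ≤ l₁.length + 1 := by
    simpa [X] using wordLength_list_prod_le (S := S) (l := l₁ ++ [s])
      (List.forall_mem_append.mpr ⟨hl₁S, List.forall_mem_singleton.mpr hsS⟩)
  have hg_le := wordLength_le_add_norm_inv_mul hinv hgen hA g X
  have hy_le : norm y ≤ D + M * l₂.length := calc
    norm y = norm (g⁻¹ * X * l₂.prod) := by
      rw [show y = g⁻¹ * (g * y) by group, ← hl_prod]
      simp [X, mul_assoc]
    _ ≤ D + norm l₂.prod := norm_mul_le _ _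
    _ ≤ D + M * l₂.length := by
      grw [norm_list_prod_le fun t ht => hM t (hl₂S t ht)]
  rw [← hl, List.length_append, List.length_cons]
  change _ ≤ norm y at hlen
  nlinarith

/-- In the free group on `A` (`|A| = d ≥ 2`) with a finite
symmetric generating set `S ⊇ A` and `M = max_{s ∈ S} |s|_A`: if the reduced
word of `g` ends with `a⁻¹`, the reduced word of `y` does not begin with `a`,
and `|y|_A ≥ (2M+1)M`, then `|gy|_S ≥ |g|_S + 1`.
(A letter `a ∈ A ∪ A⁻¹` is encoded as a pair `(i, b) : α × Bool`, with
`(i, true)` standing for the generator `of i` and `(i, false)` for its inverse,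
matching `FreeGroup.toWord`; thus `a⁻¹` is `(i, !b)`.) -/
theorem freeGroup_wordLength_add_one_le
    {α : Type*} [DecidableEq α] {d : ℕ} (hd : 2 ≤ d) (hcard : Nat.card α = d)
    (S : Set (FreeGroup α)) (hS : FinSymGen S)
    (hA : ∀ i : α, FreeGroup.of i ∈ S)
    (M : ℕ) (hM : ∀ s ∈ S, (FreeGroup.toWord s).length ≤ M)
    (hM' : ∃ s ∈ S, (FreeGroup.toWord s).length = M)
    (i : α) (b : Bool) (g y : FreeGroup α)
    (hg : (FreeGroup.toWord g).getLast? = some (i, !b))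
    (hy : ∀ p ∈ (FreeGroup.toWord y).head?, p ≠ (i, b))
    (hlen : (2 * M + 1) * M ≤ (FreeGroup.toWord y).length) :
    wordLength S g + 1 ≤ wordLength S (g * y) :=
  freeGroup_wordLength_add_one_le_general S hS hA M hM i b g y hg hy hlen
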